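/- arXiv:1801.00175 — 3 statements merged into one kernel-verified Lean document; each statement's English description precedes it below -/
import Mathlib

section
/- If K is a bounded symmetric probability density on ℝ, f is a bounded density continuous at 0, and h_n → 0, then Var(X_{n,1}) → f(0)·∫K²(u)du, where X_{n,1} = h_n^{-1/2}[K(X₁/h_n) − E K(X₁/h_n)] and X₁ has density f. -/
open MeasureTheory ProbabilityTheory Filter Topology

/-!
Substituting `x = h_n u` in the density integrals gives the exact formula
`Var X_{n,1} = ∫ K(u)² f(h_n u) du - h_n (∫ K(u) f(h_n u) du)²`.
Since `f` is bounded and continuous at `0`, dominated convergence sends both integrals to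
`f 0` times `∫ K²` resp. `∫ K`, and the factor `h_n → 0` kills the second term.
-/

section Density

variable {Ω : Type*} [MeasurableSpace Ω] {P : Measure Ω} {X : Ω → ℝ} {f : ℝ → ℝ}

theorem integral_comp_eq_integral_density_mul (hX : AEMeasurable X P) (hf_nonneg : ∀ x, 0 ≤ f x)
    (hf_meas : AEMeasurable f) (hP : P.map X = volume.withDensity (fun x => ENNReal.ofReal (f x)))
    {g : ℝ → ℝ} (hg : Measurable g) :
    ∫ ω, g (X ω) ∂P = ∫ x, f x * g x := by
  rw [← integral_map hX hg.aestronglyMeasurable, hP,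
    integral_withDensity_eq_integral_toReal_smul₀ hf_meas.ennreal_ofReal
      (ae_of_all _ fun _ => ENNReal.ofReal_lt_top)]
  simp only [ENNReal.toReal_ofReal (hf_nonneg _), smul_eq_mul]

theorem integral_comp_div_eq_mul_integral_mul_density (hX : AEMeasurable X P)
    (hf_nonneg : ∀ x, 0 ≤ f x) (hf_meas : AEMeasurable f)
    (hP : P.map X = volume.withDensity (fun x => ENNReal.ofReal (f x)))
    {g : ℝ → ℝ} (hg : Measurable g) {c : ℝ} (hc : 0 < c) :
    ∫ ω, g (X ω / c) ∂P = c * ∫ u, g u * f (c * u) := by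
  have hsubst : ∫ x, f x * g (x / c) = ∫ x, (fun u => g u * f (c * u)) (x / c) := by
    congr 1 with x
    dsimp only
    rw [mul_div_cancel₀ x hc.ne', mul_comm]
  rw [integral_comp_eq_integral_density_mul hX hf_nonneg hf_meas hP
      (show Measurable fun x => g (x / c) from hg.comp (measurable_div_const c)),
    hsubst, Measure.integral_comp_div (fun u => g u * f (c * u)), abs_of_pos hc, smul_eq_mul]

theorem variance_scaled_kernel_eq [IsProbabilityMeasure P] (hX : Measurable X)
    (hf_nonneg : ∀ x, 0 ≤ f x) (hf_meas : AEMeasurable f)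
    (hP : P.map X = volume.withDensity (fun x => ENNReal.ofReal (f x)))
    {K : ℝ → ℝ} {M : ℝ} (hK_meas : Measurable K) (hK_bdd : ∀ x, ‖K x‖ ≤ M) {c : ℝ} (hc : 0 < c) :
    variance (fun ω => c ^ (-(1:ℝ)/2) * (K (X ω / c) - ∫ ω', K (X ω' / c) ∂P)) P
      = (∫ u, K u ^ 2 * f (c * u)) - c * (∫ u, K u * f (c * u)) ^ 2 := by
  have hY_meas : Measurable fun ω => K (X ω / c) := hK_meas.comp (hX.div_const c)
  have hY : MemLp (fun ω => K (X ω / c)) 2 P :=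
    .of_bound hY_meas.aestronglyMeasurable M (ae_of_all _ fun ω => hK_bdd _)
  have hc_sq : (c ^ (-(1:ℝ)/2)) ^ 2 = c⁻¹ := by
    rw [← Real.rpow_natCast, ← Real.rpow_mul hc.le]
    norm_num [Real.rpow_neg_one]
  rw [variance_const_mul, variance_sub_const hY_meas.aestronglyMeasurable, variance_eq_sub hY]
  simp only [Pi.pow_apply]
  rw [integral_comp_div_eq_mul_integral_mul_density hX.aemeasurable hf_nonneg hf_meas hP
      (hK_meas.pow_const 2) hc,
    integral_comp_div_eq_mul_integral_mul_density hX.aemeasurable hf_nonneg hf_meas hP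
      hK_meas hc, hc_sq]
  field_simp

end Density

theorem tendsto_integral_mul_comp_mul {ι : Type*} {l : Filter ι} [l.IsCountablyGenerated]
    {g f : ℝ → ℝ} {M : ℝ} {c : ι → ℝ} (hg : Integrable g) (hf_meas : AEStronglyMeasurable f)
    (hf_bdd : ∀ x, ‖f x‖ ≤ M) (hf_cont : ContinuousAt f 0) (hc_ne : ∀ i, c i ≠ 0)
    (hc : Tendsto c l (𝓝 0)) :
    Tendsto (fun i => ∫ u, g u * f (c i * u)) l (𝓝 ((∫ u, g u) * f 0)) := by
  rw [← integral_mul_const]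
  refine tendsto_integral_filter_of_dominated_convergence (fun u => ‖g u‖ * M)
    (.of_forall fun i => hg.aestronglyMeasurable.mul
      (hf_meas.comp_quasiMeasurePreserving (Measure.quasiMeasurePreserving_smul volume (hc_ne i))))
    (.of_forall fun i => ae_of_all _ fun u => ?_) (hg.norm.mul_const M) (ae_of_all _ fun u => ?_)
  · rw [norm_mul]
    exact mul_le_mul_of_nonneg_left (hf_bdd _) (norm_nonneg _)
  · have hcu : Tendsto (fun i => c i * u) l (𝓝 0) := by simpa using hc.mul_const u
    exact (hf_cont.tendsto.comp hcu).const_mul (g u)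

theorem variance_kernel_tendsto_general
    {Ω : Type*} [MeasurableSpace Ω] (P : Measure Ω) [IsProbabilityMeasure P]
    (X₁ : Ω → ℝ) (hX₁ : Measurable X₁)
    (f K : ℝ → ℝ)
    -- f is a bounded density, continuous at 0
    (hf_nonneg : ∀ x, 0 ≤ f x) (hf_bdd : ∃ M, ∀ x, f x ≤ M)
    (hf_int : Integrable f)
    (hf_cont : ContinuousAt f 0)
    (hf_density : P.map X₁ = volume.withDensity (fun x => ENNReal.ofReal (f x)))
    -- K is a bounded symmetric probability density
    (hK_meas : Measurable K)
    (hK_nonneg : ∀ x, 0 ≤ K x) (hK_bdd : ∃ M, ∀ x, K x ≤ M)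
    (hK_int : Integrable K)
    -- bandwidths
    (h : ℕ → ℝ) (h_pos : ∀ n, 0 < h n) (h_to_zero : Tendsto h atTop (nhds 0)) :
    Tendsto
      (fun n => variance (fun ω =>
        (h n) ^ (-(1:ℝ)/2) * (K (X₁ ω / h n) - ∫ ω', K (X₁ ω' / h n) ∂P)) P)
      atTop (nhds (f 0 * ∫ u, (K u) ^ 2)) := by
  obtain ⟨Mf, hMf⟩ := hf_bdd
  obtain ⟨MK, hMK⟩ := hK_bdd
  have hf_norm : ∀ x, ‖f x‖ ≤ Mf := fun x =>
    (Real.norm_of_nonneg (hf_nonneg x)).trans_le (hMf x)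
  have hK_norm : ∀ x, ‖K x‖ ≤ MK := fun x =>
    (Real.norm_of_nonneg (hK_nonneg x)).trans_le (hMK x)
  have hK_sq : Integrable fun u => K u ^ 2 :=
    (hK_int.mul_of_top_left (memLp_top_of_bound hK_int.aestronglyMeasurable MK
      (ae_of_all _ hK_norm))).congr (ae_of_all _ fun u => (sq (K u)).symm)
  have hI := tendsto_integral_mul_comp_mul hK_sq hf_int.aestronglyMeasurable hf_norm hf_cont
    (fun n => (h_pos n).ne') h_to_zero
  have hJ := tendsto_integral_mul_comp_mul hK_int hf_int.aestronglyMeasurable hf_norm hf_cont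
    (fun n => (h_pos n).ne') h_to_zero
  simp only [variance_scaled_kernel_eq hX₁ hf_nonneg hf_int.aemeasurable hf_density hK_meas hK_norm
    (h_pos _)]
  simpa [mul_comm] using hI.sub (h_to_zero.mul (hJ.pow 2))

/-- If `K` is a bounded symmetric probability density on ℝ, `f` is a bounded density
continuous at 0, and `h n → 0`, then the variance of
`X_{n,1} = h_n^{-1/2} (K(X₁/h_n) - E K(X₁/h_n))` converges to `f 0 * ∫ K²`. -/
theorem variance_kernel_tendsto
    {Ω : Type*} [MeasurableSpace Ω] (P : Measure Ω) [IsProbabilityMeasure P]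
    (X₁ : Ω → ℝ) (hX₁ : Measurable X₁)
    (f K : ℝ → ℝ)
    -- f is a bounded density, continuous at 0
    (hf_nonneg : ∀ x, 0 ≤ f x) (hf_bdd : ∃ M, ∀ x, f x ≤ M)
    (hf_int : Integrable f) (hf_one : ∫ x, f x = 1)
    (hf_cont : ContinuousAt f 0)
    (hf_density : P.map X₁ = volume.withDensity (fun x => ENNReal.ofReal (f x)))
    -- K is a bounded symmetric probability density
    (hK_meas : Measurable K)
    (hK_nonneg : ∀ x, 0 ≤ K x) (hK_bdd : ∃ M, ∀ x, K x ≤ M)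
    (hK_symm : ∀ x, K (-x) = K x)
    (hK_int : Integrable K) (hK_one : ∫ x, K x = 1)
    -- bandwidths
    (h : ℕ → ℝ) (h_pos : ∀ n, 0 < h n) (h_to_zero : Tendsto h atTop (nhds 0)) :
    Tendsto
      (fun n => variance (fun ω =>
        (h n) ^ (-(1:ℝ)/2) * (K (X₁ ω / h n) - ∫ ω', K (X₁ ω' / h n) ∂P)) P)
      atTop (nhds (f 0 * ∫ u, (K u) ^ 2)) :=
  variance_kernel_tendsto_general P X₁ hX₁ f K hf_nonneg hf_bdd hf_int hf_cont hf_density hK_meas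
    hK_nonneg hK_bdd hK_int h h_pos h_to_zero
end

section
/- If K is bounded, f is a bounded density, and n·h_n → ∞, then for any fixed ε > 0 and A > 0, E[X_{n,1}² · 1{|X_{n,1}| ≥ ε√n / A}] → 0 as n → ∞, where X_{n,1} = h_n^{-1/2}(K(X₁/h_n) − E K(X₁/h_n)) and X₁ has density f. In fact ∫ K²(u) 1{K(u) ≥ A^{-1} ε √(n h_n)} f(u h_n) du → 0. -/
open MeasureTheory ProbabilityTheory Filter

lemma my_sqrt_atTop : Tendsto Real.sqrt atTop atTop := by
  refine tendsto_atTop_atTop.2 fun b => ⟨(max b 0) ^ 2, fun a ha => ?_⟩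
  calc b ≤ max b 0 := le_max_left _ _
    _ = Real.sqrt ((max b 0) ^ 2) := (Real.sqrt_sq (le_max_right _ _)).symm
    _ ≤ Real.sqrt a := Real.sqrt_le_sqrt ha

/-- Truncated second moment vanishes: if `K` is bounded, `f` a bounded density and
`n h_n → ∞`, then for fixed `ε > 0`, `A > 0`,
`E[X_{n,1}² 1{|X_{n,1}| ≥ ε √n / A}] → 0`, and also
`∫ K²(u) 1{K(u) ≥ A⁻¹ ε √(n h_n)} f(u h_n) du → 0`. -/
theorem truncated_second_moment_tendsto_zero
    {Ω : Type*} [MeasurableSpace Ω] (P : Measure Ω) [IsProbabilityMeasure P]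
    (X₁ : Ω → ℝ) (hX₁ : Measurable X₁)
    (f K : ℝ → ℝ)
    (hf_meas : Measurable f)
    (hf_nonneg : ∀ x, 0 ≤ f x) (hf_bdd : ∃ M, ∀ x, f x ≤ M)
    (hf_int : Integrable f) (hf_one : ∫ x, f x = 1)
    (hf_density : P.map X₁ = volume.withDensity (fun x => ENNReal.ofReal (f x)))
    (hK_meas : Measurable K)
    (hK_nonneg : ∀ x, 0 ≤ K x) (hK_bdd : ∃ M, ∀ x, K x ≤ M)
    (hK_symm : ∀ x, K (-x) = K x)
    (hK_int : Integrable K) (hK_one : ∫ x, K x = 1)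
    (h : ℕ → ℝ) (h_pos : ∀ n, 0 < h n)
    (h_to_zero : Tendsto h atTop (nhds 0))
    (nh_to_top : Tendsto (fun n : ℕ => (n : ℝ) * h n) atTop atTop)
    (ε A : ℝ) (hε : 0 < ε) (hA : 0 < A) :
    Tendsto (fun n : ℕ => ∫ ω in {ω | ε * Real.sqrt n / A ≤
        |(h n) ^ (-(1:ℝ)/2) * (K (X₁ ω / h n) - ∫ ω', K (X₁ ω' / h n) ∂P)|},
        ((h n) ^ (-(1:ℝ)/2) * (K (X₁ ω / h n) - ∫ ω', K (X₁ ω' / h n) ∂P)) ^ 2 ∂P)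
      atTop (nhds 0)
    ∧ Tendsto (fun n : ℕ => ∫ u in {u | A⁻¹ * ε * Real.sqrt ((n : ℝ) * h n) ≤ K u},
        (K u) ^ 2 * f (u * h n)) atTop (nhds 0) := by
  obtain ⟨M, hM⟩ := hK_bdd
  set M' : ℝ := max M 1 with hM'def
  have hM'pos : (0:ℝ) < M' := lt_of_lt_of_le one_pos (le_max_right _ _)
  have hKM' : ∀ x, K x ≤ M' := fun x => (hM x).trans (le_max_left _ _)
  have hsq : Tendsto (fun n : ℕ => Real.sqrt ((n : ℝ) * h n)) atTop atTop :=
    my_sqrt_atTop.comp nh_to_top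
  have hev : ∀ᶠ n : ℕ in atTop, A * M' / ε < Real.sqrt ((n : ℝ) * h n) :=
    hsq.eventually_gt_atTop _
  constructor
  · refine Tendsto.congr' ?_ (tendsto_const_nhds : Tendsto (fun _ : ℕ => (0:ℝ)) _ _)
    filter_upwards [hev] with n hn
    have hhn := h_pos n
    have hsqh : 0 < Real.sqrt (h n) := Real.sqrt_pos.2 hhn
    -- integrability of K (X₁ ω / h n)
    have hmeas : Measurable (fun ω => K (X₁ ω / h n)) :=
      hK_meas.comp (hX₁.div_const _)
    have hint : Integrable (fun ω => K (X₁ ω / h n)) P := by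
      refine (integrable_const M').mono' hmeas.aestronglyMeasurable ?_
      exact ae_of_all _ fun ω => by
        rw [Real.norm_eq_abs, abs_of_nonneg (hK_nonneg _)]; exact hKM' _
    set I : ℝ := ∫ ω', K (X₁ ω' / h n) ∂P with hIdef
    have hI0 : 0 ≤ I := integral_nonneg fun ω => hK_nonneg _
    have hIM : I ≤ M' := by
      calc I ≤ ∫ _, M' ∂P := integral_mono hint (integrable_const _) fun ω => hKM' _
        _ = M' := by simp
    have hrpow : (h n) ^ (-(1:ℝ)/2) = (Real.sqrt (h n))⁻¹ := by
      rw [Real.sqrt_eq_rpow, ← Real.rpow_neg hhn.le]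
      norm_num
    have hset : {ω | ε * Real.sqrt n / A ≤
        |(h n) ^ (-(1:ℝ)/2) * (K (X₁ ω / h n) - I)|} = (∅ : Set Ω) := by
      ext ω
      simp only [Set.mem_setOf_eq, Set.mem_empty_iff_false, iff_false, not_le]
      have hd : |K (X₁ ω / h n) - I| ≤ M' := by
        have h1 := hK_nonneg (X₁ ω / h n)
        have h2 := hKM' (X₁ ω / h n)
        rw [abs_sub_le_iff]; constructor <;> linarith
      have habs : |(h n) ^ (-(1:ℝ)/2) * (K (X₁ ω / h n) - I)|
          ≤ (Real.sqrt (h n))⁻¹ * M' := by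
        rw [abs_mul, hrpow, abs_of_nonneg (inv_nonneg.2 hsqh.le)]
        exact mul_le_mul_of_nonneg_left hd (inv_nonneg.2 hsqh.le)
      refine lt_of_le_of_lt habs ?_
      -- need (√h)⁻¹ * M' < ε * √n / A
      have hsqmul : Real.sqrt ((n : ℝ) * h n) = Real.sqrt n * Real.sqrt (h n) :=
        Real.sqrt_mul (Nat.cast_nonneg n) _
      rw [lt_div_iff₀ hA, inv_mul_eq_div, div_mul_eq_mul_div, div_lt_iff₀ hsqh]
      have : A * M' < ε * Real.sqrt ((n : ℝ) * h n) := by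
        rw [div_lt_iff₀ hε] at hn; linarith [hn]
      rw [hsqmul] at this; nlinarith [hsqh.le]
    rw [hset]
    simp
  · refine Tendsto.congr' ?_ (tendsto_const_nhds : Tendsto (fun _ : ℕ => (0:ℝ)) _ _)
    filter_upwards [hev] with n hn
    have hset : {u : ℝ | A⁻¹ * ε * Real.sqrt ((n : ℝ) * h n) ≤ K u} = (∅ : Set ℝ) := by
      ext u
      simp only [Set.mem_setOf_eq, Set.mem_empty_iff_false, iff_false, not_le]
      have h2 := hKM' u
      have : A * M' < ε * Real.sqrt ((n : ℝ) * h n) := by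
        rw [div_lt_iff₀ hε] at hn; linarith [hn]
      have hAi : A⁻¹ * (A * M') < A⁻¹ * (ε * Real.sqrt ((n : ℝ) * h n)) :=
        mul_lt_mul_of_pos_left this (inv_pos.2 hA)
      rw [inv_mul_cancel_left₀ hA.ne'] at hAi
      calc K u ≤ M' := h2
        _ < A⁻¹ * (ε * Real.sqrt ((n : ℝ) * h n)) := hAi
        _ = A⁻¹ * ε * Real.sqrt ((n : ℝ) * h n) := by ring
    rw [hset]
    simp
end

section
/- (MSE formula) Under the setup above, MSE(r̂_n) = E(r̂_n − μ_Y)² = f(0)^{-2} [E(Y₀²) Var(f̂_n(0)) + (E V_{n,1})² Var(Ȳ_n) + μ_Y² (Bias f̂_n(0))²], where Bias f̂_n(0) = E f̂_n(0) − f(0). -/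
/-!
The σ-algebras generated by the `Y ∘ T^[i]` and by the `X i` are independent, so every moment of
`∑ Y_i V_i` factors into a moment of the `Y_i` times a moment of the `V_i`; since the `V_i` are
i.i.d., `E[V_i V_j] = (E V₀)² + [i = j] Var V₀`. Together with stationarity
(`E Y_i = μ_Y`, `E Y_i² = E Y₀²`) this gives
`Var(∑ Y_i V_i) = E Y₀² · Var(∑ V_i) + (E V₀)² · Var(∑ Y_i)` and `E(∑ Y_i V_i) = E V₀ · E(∑ Y_i)`,
and the formula is the decomposition of the mean squared error of `r̂_n` into its variance and
its squared bias.
-/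

open MeasureTheory ProbabilityTheory Finset

theorem MeasureTheory.MeasurePreserving.integral_comp_of_aestronglyMeasurable
    {α β E : Type*} [MeasurableSpace α] [MeasurableSpace β] [NormedAddCommGroup E]
    [NormedSpace ℝ E] {μ : Measure α} {ν : Measure β} {T : α → β}
    (hT : MeasurePreserving T μ ν) {g : β → E} (hg : AEStronglyMeasurable g ν) :
    ∫ x, g (T x) ∂μ = ∫ y, g y ∂ν := by
  rw [← hT.map_eq] at hg ⊢
  exact (integral_map hT.aemeasurable hg).symm

namespace ProbabilityTheory

theorem measurable_iSup_comap {Ω ι β : Type*} [mβ : MeasurableSpace β] (F : ι → Ω → β) (i : ι) :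
    Measurable[⨆ j, mβ.comap (F j)] (F i) :=
  Measurable.of_comap_le (le_iSup (fun j => mβ.comap (F j)) i)

variable {Ω ι : Type*} {m₁ m₂ : MeasurableSpace Ω} [MeasurableSpace Ω] {P : Measure Ω}

theorem integral_sub_const_sq_eq_variance_add [IsProbabilityMeasure P] {Z : Ω → ℝ}
    (hZ : MemLp Z 2 P) (a : ℝ) :
    ∫ ω, (Z ω - a) ^ 2 ∂P = variance Z P + (∫ ω, Z ω ∂P - a) ^ 2 := by
  have hZa : MemLp (fun ω => Z ω - a) 2 P := hZ.sub (memLp_const a)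
  rw [← variance_sub_const hZ.aestronglyMeasurable a, variance_eq_sub hZa,
    integral_sub (hZ.integrable one_le_two) (integrable_const a), integral_const]
  simp

theorem integral_sum_sq (s : Finset ι) {Z : ι → Ω → ℝ} (hZ : ∀ i, MemLp (Z i) 2 P) :
    ∫ ω, (∑ i ∈ s, Z i ω) ^ 2 ∂P = ∑ i ∈ s, ∑ j ∈ s, ∫ ω, Z i ω * Z j ω ∂P := by
  have hZZ (i j : ι) : Integrable (fun ω => Z i ω * Z j ω) P := (hZ i).integrable_mul (hZ j)
  simp_rw [sq, Finset.sum_mul_sum]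
  rw [integral_finsetSum _ fun i _ => integrable_finsetSum _ fun j _ => hZZ i j]
  exact Finset.sum_congr rfl fun i _ => integral_finsetSum _ fun j _ => hZZ i j

theorem integral_sum_of_integral_eq (s : Finset ι) {Z : ι → Ω → ℝ} (hZ : ∀ i, Integrable (Z i) P)
    {a : ℝ} (ha : ∀ i, ∫ ω, Z i ω ∂P = a) :
    ∫ ω, ∑ i ∈ s, Z i ω ∂P = #s * a := by
  simp [integral_finsetSum _ fun i _ => hZ i, ha]

theorem Indep.indepFun_of_measurable (h : Indep m₁ m₂ P)
    {β γ : Type*} [MeasurableSpace β] [MeasurableSpace γ] {F : Ω → β} {G : Ω → γ}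
    (hF : Measurable[m₁] F) (hG : Measurable[m₂] G) : F ⟂ᵢ[P] G :=
  (IndepFun_iff_Indep F G P).2 (indep_of_indep_of_le h hF.comap_le hG.comap_le)

theorem IndepFun.memLp_two_mul {U W : Ω → ℝ} (hUW : U ⟂ᵢ[P] W) (hU : MemLp U 2 P)
    (hW : MemLp W 2 P) : MemLp (U * W) 2 P := by
  refine (memLp_two_iff_integrable_sq (hU.1.mul hW.1)).2 ?_
  have h := (hUW.comp (measurable_id.pow_const 2) (measurable_id.pow_const 2)).integrable_mul
    ((memLp_two_iff_integrable_sq hU.1).1 hU) ((memLp_two_iff_integrable_sq hW.1).1 hW)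
  convert h using 1
  ext ω
  simp [mul_pow]

section SumOfProducts

variable {U W : ι → Ω → ℝ}

theorem integral_sum_mul_of_indep (s : Finset ι) (hm : Indep m₁ m₂ P)
    (hUm : ∀ i, Measurable[m₁] (U i)) (hWm : ∀ i, Measurable[m₂] (W i))
    (hU : ∀ i, Integrable (U i) P) (hW : ∀ i, Integrable (W i) P) {v : ℝ}
    (hWv : ∀ i, ∫ ω, W i ω ∂P = v) :
    ∫ ω, ∑ i ∈ s, U i ω * W i ω ∂P = v * ∫ ω, ∑ i ∈ s, U i ω ∂P := by
  have hUW (i : ι) : U i ⟂ᵢ[P] W i := hm.indepFun_of_measurable (hUm i) (hWm i)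
  rw [integral_finsetSum (f := fun i ω => U i ω * W i ω) _
      fun i _ => (hUW i).integrable_mul (hU i) (hW i),
    integral_finsetSum _ fun i _ => hU i, Finset.mul_sum]
  refine Finset.sum_congr rfl fun i _ => ?_
  rw [← hWv i, mul_comm]
  exact (hUW i).integral_fun_mul_eq_mul_integral (hU i).1 (hW i).1

theorem integral_sum_mul_sq_of_indep (s : Finset ι) (hm : Indep m₁ m₂ P)
    (hUm : ∀ i, Measurable[m₁] (U i)) (hWm : ∀ i, Measurable[m₂] (W i))
    (hU : ∀ i, MemLp (U i) 2 P) (hW : ∀ i, MemLp (W i) 2 P) :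
    ∫ ω, (∑ i ∈ s, U i ω * W i ω) ^ 2 ∂P
      = ∑ i ∈ s, ∑ j ∈ s, (∫ ω, U i ω * U j ω ∂P) * ∫ ω, W i ω * W j ω ∂P := by
  have hUW (i : ι) : MemLp (fun ω => U i ω * W i ω) 2 P :=
    (hm.indepFun_of_measurable (hUm i) (hWm i)).memLp_two_mul (hU i) (hW i)
  rw [integral_sum_sq s hUW]
  refine Finset.sum_congr rfl fun i _ => Finset.sum_congr rfl fun j _ => ?_
  calc ∫ ω, U i ω * W i ω * (U j ω * W j ω) ∂P
      = ∫ ω, U i ω * U j ω * (W i ω * W j ω) ∂P := integral_congr_ae (ae_of_all _ fun ω => by ring)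
    _ = _ := (hm.indepFun_of_measurable ((hUm i).mul (hUm j)) ((hWm i).mul (hWm j))
        ).integral_fun_mul_eq_mul_integral ((hU i).1.mul (hU j).1) ((hW i).1.mul (hW j).1)

theorem integral_mul_of_identDistrib [IsProbabilityMeasure P] [DecidableEq ι] {i₀ : ι}
    (hind : iIndepFun W P) (hid : ∀ i, IdentDistrib (W i) (W i₀) P P) (hW : MemLp (W i₀) 2 P)
    (i j : ι) :
    ∫ ω, W i ω * W j ω ∂P = (∫ ω, W i₀ ω ∂P) ^ 2 + if i = j then variance (W i₀) P else 0 := by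
  by_cases hij : i = j
  · subst hij
    have h := ((hid i).comp (measurable_id.mul measurable_id)).integral_eq
    simp only [Function.comp_apply, Pi.mul_apply, id] at h
    rw [if_pos rfl, variance_eq_sub hW, add_sub_cancel, h]
    simp only [Pi.pow_apply, sq]
  · rw [if_neg hij, add_zero, (hind.indepFun hij).integral_fun_mul_eq_mul_integral
      (hid i).aemeasurable_fst.aestronglyMeasurable (hid j).aemeasurable_fst.aestronglyMeasurable,
      (hid i).integral_eq, (hid j).integral_eq, sq]

theorem variance_sum_of_identDistrib [IsProbabilityMeasure P] (s : Finset ι) {i₀ : ι}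
    (hind : iIndepFun W P) (hid : ∀ i, IdentDistrib (W i) (W i₀) P P) (hW : MemLp (W i₀) 2 P) :
    variance (fun ω => ∑ i ∈ s, W i ω) P = #s * variance (W i₀) P := by
  rw [← Finset.sum_fn, IndepFun.variance_sum (fun i _ => (hid i).symm.memLp_snd hW)
    fun i _ j _ hij => hind.indepFun hij]
  simp [(hid _).variance_eq]

theorem integral_sum_mul_sq_of_identDistrib [IsProbabilityMeasure P] (s : Finset ι)
    (hm : Indep m₁ m₂ P) (hUm : ∀ i, Measurable[m₁] (U i)) (hWm : ∀ i, Measurable[m₂] (W i))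
    (hU : ∀ i, MemLp (U i) 2 P) {i₀ : ι} (hind : iIndepFun W P)
    (hid : ∀ i, IdentDistrib (W i) (W i₀) P P) (hW : MemLp (W i₀) 2 P) :
    ∫ ω, (∑ i ∈ s, U i ω * W i ω) ^ 2 ∂P
      = (∫ ω, W i₀ ω ∂P) ^ 2 * ∫ ω, (∑ i ∈ s, U i ω) ^ 2 ∂P
        + variance (W i₀) P * ∑ i ∈ s, ∫ ω, U i ω ^ 2 ∂P := by
  classical
  rw [integral_sum_mul_sq_of_indep s hm hUm hWm hU fun i => (hid i).symm.memLp_snd hW,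
    integral_sum_sq s hU]
  simp_rw [integral_mul_of_identDistrib hind hid hW, mul_add, Finset.sum_add_distrib, mul_ite,
    mul_zero, Finset.sum_ite_eq, Finset.mul_sum]
  congr 1
  · exact Finset.sum_congr rfl fun i _ => Finset.sum_congr rfl fun j _ => mul_comm _ _
  · exact Finset.sum_congr rfl fun i hi => by rw [if_pos hi, mul_comm]; simp only [sq]

theorem memLp_sum_mul_of_indep (s : Finset ι) (hm : Indep m₁ m₂ P)
    (hUm : ∀ i, Measurable[m₁] (U i)) (hWm : ∀ i, Measurable[m₂] (W i))
    (hU : ∀ i, MemLp (U i) 2 P) (hW : ∀ i, MemLp (W i) 2 P) :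
    MemLp (fun ω => ∑ i ∈ s, U i ω * W i ω) 2 P :=
  memLp_finsetSum s fun i _ =>
    (hm.indepFun_of_measurable (hUm i) (hWm i)).memLp_two_mul (hU i) (hW i)

theorem variance_sum_mul_of_indep [IsProbabilityMeasure P] (s : Finset ι) (hm : Indep m₁ m₂ P)
    (hUm : ∀ i, Measurable[m₁] (U i)) (hWm : ∀ i, Measurable[m₂] (W i))
    (hU : ∀ i, MemLp (U i) 2 P) {q : ℝ} (hUq : ∀ i, ∫ ω, U i ω ^ 2 ∂P = q) {i₀ : ι}
    (hind : iIndepFun W P) (hid : ∀ i, IdentDistrib (W i) (W i₀) P P) (hW : MemLp (W i₀) 2 P) :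
    variance (fun ω => ∑ i ∈ s, U i ω * W i ω) P
      = q * variance (fun ω => ∑ i ∈ s, W i ω) P
        + (∫ ω, W i₀ ω ∂P) ^ 2 * variance (fun ω => ∑ i ∈ s, U i ω) P := by
  have hW' (i : ι) : MemLp (W i) 2 P := (hid i).symm.memLp_snd hW
  rw [variance_eq_sub (memLp_sum_mul_of_indep s hm hUm hWm hU hW'),
    variance_eq_sub (memLp_finsetSum s fun i _ => hU i), variance_sum_of_identDistrib s hind hid hW]
  simp only [Pi.pow_apply]
  rw [integral_sum_mul_sq_of_identDistrib s hm hUm hWm hU hind hid hW,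
    integral_sum_mul_of_indep s hm hUm hWm (fun i => (hU i).integrable one_le_two)
      (fun i => (hW' i).integrable one_le_two) fun i => (hid i).integral_eq]
  simp only [hUq, Finset.sum_const, nsmul_eq_mul]
  ring

theorem integral_inv_mul_sum_mul_sub_sq [IsProbabilityMeasure P] (s : Finset ι) (hm : Indep m₁ m₂ P)
    (hUm : ∀ i, Measurable[m₁] (U i)) (hWm : ∀ i, Measurable[m₂] (W i))
    (hU : ∀ i, MemLp (U i) 2 P) {μ q : ℝ} (hUμ : ∀ i, ∫ ω, U i ω ∂P = μ)
    (hUq : ∀ i, ∫ ω, U i ω ^ 2 ∂P = q) {i₀ : ι} (hind : iIndepFun W P)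
    (hid : ∀ i, IdentDistrib (W i) (W i₀) P P) (hW : MemLp (W i₀) 2 P) {a : ℝ} (ha : a ≠ 0)
    (c : ℝ) :
    ∫ ω, (a⁻¹ * (c * ∑ i ∈ s, U i ω * W i ω) - μ) ^ 2 ∂P
      = a⁻¹ ^ 2 * (q * variance (fun ω => c * ∑ i ∈ s, W i ω) P
        + (∫ ω, W i₀ ω ∂P) ^ 2 * variance (fun ω => c * ∑ i ∈ s, U i ω) P
        + μ ^ 2 * (∫ ω, c * ∑ i ∈ s, W i ω ∂P - a) ^ 2) := by
  have hW' (i : ι) : MemLp (W i) 2 P := (hid i).symm.memLp_snd hW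
  have hUW := memLp_sum_mul_of_indep s hm hUm hWm hU hW'
  rw [integral_sub_const_sq_eq_variance_add ((hUW.const_mul _).const_mul _), variance_const_mul,
    variance_const_mul, variance_const_mul, variance_const_mul,
    variance_sum_mul_of_indep s hm hUm hWm hU hUq hind hid hW, integral_const_mul,
    integral_const_mul, integral_const_mul,
    integral_sum_mul_of_indep s hm hUm hWm (fun i => (hU i).integrable one_le_two)
      (fun i => (hW' i).integrable one_le_two) fun i => (hid i).integral_eq,
    integral_sum_of_integral_eq s (fun i => (hU i).integrable one_le_two) hUμ,
    integral_sum_of_integral_eq s (fun i => (hW' i).integrable one_le_two)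
      fun i => (hid i).integral_eq]
  field_simp

end SumOfProducts

end ProbabilityTheory

theorem mse_formula_general
    {Ω : Type*} [MeasurableSpace Ω] (P : Measure Ω) [IsProbabilityMeasure P]
    (T : Ω → Ω) (hT : MeasurePreserving T P P)
    (Y : Ω → ℝ) (hY2 : MemLp Y 2 P)
    (μY : ℝ) (hμY : μY = ∫ ω, Y ω ∂P)
    (X : ℕ → Ω → ℝ)
    (hX_indep : iIndepFun X P)
    (hX_ident : ∀ i, IdentDistrib (X i) (X 0) P P)
    (hXY_indep : Indep
      (⨆ i : ℕ, MeasurableSpace.comap (fun ω => Y (T^[i] ω)) (inferInstance : MeasurableSpace ℝ))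
      (⨆ i : ℕ, MeasurableSpace.comap (X i) (inferInstance : MeasurableSpace ℝ)) P)
    (f K : ℝ → ℝ)
    (hf0 : f 0 ≠ 0)
    (hK_meas : Measurable K)
    (hK_nonneg : ∀ x, 0 ≤ K x) (hK_bdd : ∃ M, ∀ x, K x ≤ M)
    (h : ℝ)
    (n : ℕ)
    (V : ℕ → Ω → ℝ) (hV : ∀ i, V i = fun ω => h⁻¹ * K (X i ω / h))
    (fhat : Ω → ℝ) (hfhat : fhat = fun ω => (1 / (n : ℝ)) * ∑ i ∈ Finset.range n, V i ω)
    (rhat : Ω → ℝ)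
    (hrhat : rhat = fun ω => (f 0)⁻¹ * ((1 / (n : ℝ)) * ∑ i ∈ Finset.range n, Y (T^[i] ω) * V i ω)) :
    ∫ ω, (rhat ω - μY) ^ 2 ∂P
      = (f 0)⁻¹ ^ 2 *
          ((∫ ω, (Y ω) ^ 2 ∂P) * variance fhat P
            + (∫ ω, V 0 ω ∂P) ^ 2 *
              variance (fun ω => (1 / (n : ℝ)) * ∑ i ∈ Finset.range n, Y (T^[i] ω)) P
            + μY ^ 2 * ((∫ ω, fhat ω ∂P) - f 0) ^ 2) := by
  obtain ⟨M, hM⟩ := hK_bdd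
  set g : ℝ → ℝ := fun x => h⁻¹ * K (x / h)
  have hVg : V = fun i => g ∘ X i := funext hV
  have hg : Measurable g := by fun_prop
  have hV_indep : iIndepFun V P := hVg ▸ hX_indep.comp (fun _ => g) fun _ => hg
  have hV_ident (i : ℕ) : IdentDistrib (V i) (V 0) P P := hVg ▸ (hX_ident i).comp hg
  have hV_L2 (i : ℕ) : MemLp (V i) 2 P := by
    refine .of_bound (hV_ident i).aemeasurable_fst.aestronglyMeasurable (|h⁻¹| * M)
      (ae_of_all _ fun ω => ?_)
    rw [hV, norm_mul, Real.norm_eq_abs, Real.norm_of_nonneg (hK_nonneg _)]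
    exact mul_le_mul_of_nonneg_left (hM _) (abs_nonneg _)
  have hVm (i : ℕ) : Measurable[⨆ i, MeasurableSpace.comap (X i) inferInstance] (V i) :=
    hVg ▸ hg.comp (measurable_iSup_comap X i)
  have hY_L2 (i : ℕ) : MemLp (fun ω => Y (T^[i] ω)) 2 P := hY2.comp_measurePreserving (hT.iterate i)
  have hEY (i : ℕ) : ∫ ω, Y (T^[i] ω) ∂P = μY :=
    hμY ▸ (hT.iterate i).integral_comp_of_aestronglyMeasurable hY2.1
  have hEY2 (i : ℕ) : ∫ ω, Y (T^[i] ω) ^ 2 ∂P = ∫ ω, Y ω ^ 2 ∂P :=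
    (hT.iterate i).integral_comp_of_aestronglyMeasurable (hY2.1.pow 2)
  subst hrhat hfhat
  exact integral_inv_mul_sum_mul_sub_sq _ hXY_indep (measurable_iSup_comap _) hVm hY_L2 hEY hEY2
    hV_indep hV_ident (hV_L2 0) hf0 _

/-- MSE formula: with `V_{n,i} = h⁻¹ K(X_i/h)`, `f̂_n(0) = (1/n) Σ V_{n,i}` and
`r̂_n = (f 0)⁻¹ (1/n) Σ Y_i V_{n,i}`,
`MSE(r̂_n) = E(r̂_n − μ_Y)² = (f 0)⁻² [E(Y₀²) Var(f̂_n(0)) + (E V_{n,1})² Var(Ȳ_n)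
  + μ_Y² (Bias f̂_n(0))²]`, where `Bias f̂_n(0) = E f̂_n(0) − f 0`. -/
theorem mse_formula
    {Ω : Type*} [MeasurableSpace Ω] (P : Measure Ω) [IsProbabilityMeasure P]
    (T : Ω → Ω) (hT : MeasurePreserving T P P)
    (Y : Ω → ℝ) (hY_meas : Measurable Y) (hY2 : MemLp Y 2 P)
    (μY : ℝ) (hμY : μY = ∫ ω, Y ω ∂P)
    (X : ℕ → Ω → ℝ) (hX_meas : ∀ i, Measurable (X i))
    (hX_indep : iIndepFun X P)
    (hX_ident : ∀ i, IdentDistrib (X i) (X 0) P P)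
    (hXY_indep : Indep
      (⨆ i : ℕ, MeasurableSpace.comap (fun ω => Y (T^[i] ω)) (inferInstance : MeasurableSpace ℝ))
      (⨆ i : ℕ, MeasurableSpace.comap (X i) (inferInstance : MeasurableSpace ℝ)) P)
    (f K : ℝ → ℝ)
    (hf_nonneg : ∀ x, 0 ≤ f x) (hf_bdd : ∃ M, ∀ x, f x ≤ M)
    (hf_int : Integrable f) (hf_one : ∫ x, f x = 1) (hf0 : f 0 ≠ 0)
    (hf_density : P.map (X 0) = volume.withDensity (fun x => ENNReal.ofReal (f x)))
    (hK_meas : Measurable K)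
    (hK_nonneg : ∀ x, 0 ≤ K x) (hK_bdd : ∃ M, ∀ x, K x ≤ M)
    (hK_int : Integrable K) (hK_one : ∫ x, K x = 1)
    (h : ℝ) (h_pos : 0 < h)
    (n : ℕ) (hn : 0 < n)
    (V : ℕ → Ω → ℝ) (hV : ∀ i, V i = fun ω => h⁻¹ * K (X i ω / h))
    (fhat : Ω → ℝ) (hfhat : fhat = fun ω => (1 / (n : ℝ)) * ∑ i ∈ Finset.range n, V i ω)
    (rhat : Ω → ℝ)
    (hrhat : rhat = fun ω => (f 0)⁻¹ * ((1 / (n : ℝ)) * ∑ i ∈ Finset.range n, Y (T^[i] ω) * V i ω)) :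
    ∫ ω, (rhat ω - μY) ^ 2 ∂P
      = (f 0)⁻¹ ^ 2 *
          ((∫ ω, (Y ω) ^ 2 ∂P) * variance fhat P
            + (∫ ω, V 0 ω ∂P) ^ 2 *
              variance (fun ω => (1 / (n : ℝ)) * ∑ i ∈ Finset.range n, Y (T^[i] ω)) P
            + μY ^ 2 * ((∫ ω, fhat ω ∂P) - f 0) ^ 2) :=
  mse_formula_general P T hT Y hY2 μY hμY X hX_indep hX_ident hXY_indep f K hf0 hK_meas hK_nonneg
    hK_bdd h n V hV fhat hfhat rhat hrhat
end
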